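/- The null vector p̃₁ = (1, 0, 0) lies on the spinal spheres of the four bisectors B₁, B₂, B₃, B₄ bounding the Dirichlet domain: ⟨p̃₁, p̃₁⟩ = 0 and |⟨p̃₁, p̃₀⟩| = |⟨p̃₁, G₁·p̃₀⟩| = |⟨p̃₁, G₃⁻¹·p̃₀⟩| = |⟨p̃₁, G₂·G₁·p̃₀⟩| = |⟨p̃₁, G₂·G₃⁻¹·p̃₀⟩| = 1. -/

import Mathlib

noncomputable section

open Matrix

/-- ω = i·√7 -/
def ω : ℂ := Complex.I * Real.sqrt 7

def G₁ : Matrix (Fin 3) (Fin 3) ℂ := !![1, 1, (-1-ω)/2; 0, 1, -1; 0, 0, 1]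

def G₃ : Matrix (Fin 3) (Fin 3) ℂ := !![1, 0, 0; -1, 1, 0; (-1+ω)/2, 1, 1]

def G₂ : Matrix (Fin 3) (Fin 3) ℂ := G₃ * G₁⁻¹ * G₃⁻¹ * G₁

/-- Hermitian form ⟨Z,W⟩ = Z₁·conj(W₃) + Z₂·conj(W₂) + Z₃·conj(W₁). -/
def herm (Z W : Fin 3 → ℂ) : ℂ :=
  Z 0 * (starRingEnd ℂ) (W 2) + Z 1 * (starRingEnd ℂ) (W 1) + Z 2 * (starRingEnd ℂ) (W 0)

def p₀ : Fin 3 → ℂ := ![1, -(3+ω)/4, -1]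
def p₁ : Fin 3 → ℂ := ![1, 0, 0]

/-!
Since `p₁ = e₁`, the form `⟨p₁, W⟩` is `conj W₃`, so each claim says that a third coordinate has
modulus one. Inverting the unitriangular generators explicitly shows that `G₂` has bottom row
`(-1, 0, 0)`, and the relevant coordinates come out as `±1` or `±(3 + ω)/4`, where
`|3 + i√7| = 4`.
-/

theorem ω_mul_self : ω * ω = -7 := by
  have h : ((Real.sqrt 7 : ℝ) : ℂ) * (Real.sqrt 7 : ℝ) = 7 := by
    exact_mod_cast Real.mul_self_sqrt (by norm_num : (0 : ℝ) ≤ 7)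
  rw [ω, mul_mul_mul_comm, Complex.I_mul_I, h]
  ring

theorem norm_three_add_ω : ‖3 + ω‖ = 4 := by
  rw [ω, mul_comm, show (3 : ℂ) = ((3 : ℝ) : ℂ) by norm_num, Complex.norm_add_mul_I,
    Real.sq_sqrt (by norm_num), show (3 : ℝ) ^ 2 + 7 = 4 ^ 2 by norm_num,
    Real.sqrt_sq (by norm_num)]

theorem inv_upper_unitriangular_fin_three {R : Type*} [CommRing R] (a b c : R) :
    (!![1, a, b; 0, 1, c; 0, 0, 1] : Matrix (Fin 3) (Fin 3) R)⁻¹ =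
      !![1, -a, a * c - b; 0, 1, -c; 0, 0, 1] := by
  refine Matrix.inv_eq_right_inv ?_
  rw [Matrix.mul_fin_three, Matrix.one_fin_three]
  simp; ring

theorem inv_lower_unitriangular_fin_three {R : Type*} [CommRing R] (a b c : R) :
    (!![1, 0, 0; a, 1, 0; b, c, 1] : Matrix (Fin 3) (Fin 3) R)⁻¹ =
      !![1, 0, 0; -a, 1, 0; a * c - b, -c, 1] := by
  refine Matrix.inv_eq_right_inv ?_
  rw [Matrix.mul_fin_three, Matrix.one_fin_three]
  simp; ring

theorem G₁_inv : G₁⁻¹ = !![1, -1, (-1 + ω) / 2; 0, 1, 1; 0, 0, 1] := by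
  rw [G₁, inv_upper_unitriangular_fin_three]
  norm_num; ring

theorem G₃_inv : G₃⁻¹ = !![1, 0, 0; 1, 1, 0; (-1 - ω) / 2, -1, 1] := by
  rw [G₃, inv_lower_unitriangular_fin_three]
  norm_num; ring

theorem G₂_eq : G₂ = !![2, (3 - ω) / 2, -1; (-3 - ω) / 2, -1, 0; -1, 0, 0] := by
  rw [G₂, G₁_inv, G₃_inv, G₁, G₃]
  simp only [Matrix.mul_fin_three]
  ext i j; fin_cases i <;> fin_cases j <;> simp <;> grind [ω_mul_self]

theorem G₂_mulVec_two (v : Fin 3 → ℂ) : (G₂ *ᵥ v) 2 = -v 0 := by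
  simp [G₂_eq, Matrix.mulVec, Matrix.vecHead]

theorem G₁_mulVec_p₀ : G₁ *ᵥ p₀ = ![(3 + ω) / 4, (1 - ω) / 4, -1] := by
  ext i; fin_cases i <;> simp [G₁, p₀, Matrix.mulVec] <;> ring

theorem G₃_inv_mulVec_p₀ : G₃⁻¹ *ᵥ p₀ = ![1, (1 - ω) / 4, -((3 + ω) / 4)] := by
  ext i; fin_cases i <;> simp [G₃_inv, p₀, Matrix.mulVec] <;> ring

theorem norm_herm_p₁ (W : Fin 3 → ℂ) : ‖herm p₁ W‖ = ‖W 2‖ := by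
  simp [herm, p₁]

theorem stmt13 :
    herm p₁ p₁ = 0 ∧
    ‖herm p₁ p₀‖ = 1 ∧
    ‖herm p₁ (G₁ *ᵥ p₀)‖ = 1 ∧
    ‖herm p₁ (G₃⁻¹ *ᵥ p₀)‖ = 1 ∧
    ‖herm p₁ ((G₂ * G₁) *ᵥ p₀)‖ = 1 ∧
    ‖herm p₁ ((G₂ * G₃⁻¹) *ᵥ p₀)‖ = 1 := by
  refine ⟨by simp [herm, p₁], ?_⟩
  simp only [norm_herm_p₁, ← Matrix.mulVec_mulVec, G₂_mulVec_two, norm_neg, G₁_mulVec_p₀,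
    G₃_inv_mulVec_p₀]
  simp [p₀, norm_three_add_ω]
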